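/- arXiv:2301.11687 — 3 statements merged into one kernel-verified Lean document; each statement's English description precedes it below -/
import Mathlib

section
/- Under the dataset collection assumption with η ∈ (0,1], the behavioral cloning policy π^BC trained on the expert dataset D^E satisfies E[V(π^E) − V(π^BC)] ≤ min{H, 2|S|H²/(η N_tot)}, where the expectation is over the randomness of the dataset collection. -/
open Finset

/-- An episodic MDP `M = (S, A, P, r, H, ρ)` with finite state space `S`, finite action
space `A`, horizon `H`, initial state distribution `ρ`, non-stationary transitions `P` and
rewards `r` taking values in `[0,1]`.  Time steps are indexed by `0, 1, …, H-1`. -/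
structure MDP (S A : Type) [Fintype S] [Fintype A] where
  H : ℕ
  ρ : S → ℝ
  P : ℕ → S → A → S → ℝ
  r : ℕ → S → A → ℝ
  ρ_nonneg : ∀ s, 0 ≤ ρ s
  ρ_sum : ∑ s, ρ s = 1
  P_nonneg : ∀ h s a s', 0 ≤ P h s a s'
  P_sum : ∀ h s a, ∑ s', P h s a s' = 1
  r_nonneg : ∀ h s a, 0 ≤ r h s a
  r_le_one : ∀ h s a, r h s a ≤ 1

variable {S A : Type} [Fintype S] [Fintype A] [DecidableEq S] [DecidableEq A]

/-- A (time-dependent, stochastic) policy: `π h s a` is the probability of action `a`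
at state `s` in step `h`. -/
def IsPolicy (π : ℕ → S → A → ℝ) : Prop :=
  (∀ h s a, 0 ≤ π h s a) ∧ (∀ h s, ∑ a, π h s a = 1)

/-- A deterministic policy: at each step and state it puts all mass on a single action. -/
def IsDetPolicy (π : ℕ → S → A → ℝ) : Prop :=
  ∃ f : ℕ → S → A, ∀ h s a, π h s a = if a = f h s then 1 else 0

/-- The state distribution `d^π_h(s)` of policy `π` at step `h`. -/
noncomputable def dState (M : MDP S A) (π : ℕ → S → A → ℝ) : ℕ → S → ℝ
  | 0 => M.ρ
  | h + 1 => fun s' => ∑ s, ∑ a, dState M π h s * π h s a * M.P h s a s'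

/-- The state-action distribution `d^π_h(s, a)` of policy `π` at step `h`. -/
noncomputable def dSA (M : MDP S A) (π : ℕ → S → A → ℝ) (h : ℕ) (s : S) (a : A) : ℝ :=
  dState M π h s * π h s a

/-- The policy value `V(π) = E[Σ_{h} r_h(s_h, a_h)] = Σ_h Σ_{(s,a)} d^π_h(s,a) r_h(s,a)`. -/
noncomputable def value (M : MDP S A) (π : ℕ → S → A → ℝ) : ℝ :=
  ∑ h ∈ Finset.range M.H, ∑ s, ∑ a, dSA M π h s a * M.r h s a

/-- Probability that rolling out policy `π` in MDP `M` produces trajectory `tr`. -/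
noncomputable def trajProb (M : MDP S A) (π : ℕ → S → A → ℝ) (tr : Fin M.H → S × A) : ℝ :=
  ∏ h : Fin M.H,
    ((if (h : ℕ) = 0 then M.ρ (tr h).1 else 1) * π h (tr h).1 (tr h).2 *
      (if hh : (h : ℕ) + 1 < M.H then M.P h (tr h).1 (tr h).2 (tr ⟨(h : ℕ) + 1, hh⟩).1 else 1))

/-- A labeled dataset of `N` trajectories of length `H`; the Boolean label records whether
the trajectory was generated by the expert (`true`) or by the behavior policy (`false`).
The expert dataset `D^E` is the sub-dataset labeled `true`, the supplementary dataset `D^S`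
is the sub-dataset labeled `false`, and the union dataset `D^U` is the whole dataset. -/
abbrev Dataset (S A : Type) (H N : ℕ) := Fin N → (Fin H → S × A) × Bool

/-- Probability of observing the labeled dataset `D` under Assumption 1 (each of the `N`
trajectories is independently rolled out from the expert `πE` with probability `η` and
from the behavior policy `πβ` with probability `1 - η`). -/
noncomputable def datasetProb (M : MDP S A) (πE πβ : ℕ → S → A → ℝ) (η : ℝ) {N : ℕ}
    (D : Dataset S A M.H N) : ℝ :=
  ∏ i, (if (D i).2 then η * trajProb M πE (D i).1 else (1 - η) * trajProb M πβ (D i).1)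

/-- Expectation of `f` over the randomness of the dataset collection (Assumption 1). -/
noncomputable def expect (M : MDP S A) (πE πβ : ℕ → S → A → ℝ) (η : ℝ) (N : ℕ)
    (f : Dataset S A M.H N → ℝ) : ℝ :=
  ∑ D : Dataset S A M.H N, datasetProb M πE πβ η D * f D

/-- Whether the step-`h` state-action pair of trajectory `tr` equals `(s, a)`. -/
def hit {H : ℕ} (tr : Fin H → S × A) (h : ℕ) (s : S) (a : A) : Bool :=
  if hh : h < H then decide (tr ⟨h, hh⟩ = (s, a)) else false

/-- `n_h(s, a)`: the number of trajectories of `D` (among those whose label is selected by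
`keep`) whose step-`h` state-action pair is `(s, a)`. -/
def countSA {H N : ℕ} (D : Dataset S A H N) (keep : Bool → Bool) (h : ℕ) (s : S) (a : A) : ℕ :=
  (Finset.univ.filter fun i : Fin N => (keep (D i).2 && hit (D i).1 h s a) = true).card

/-- The behavioral cloning policy determined by counts `n`:
`π_h(a|s) = n_h(s,a)/n_h(s)` if `n_h(s) > 0` and `1/|A|` otherwise. -/
noncomputable def bcFromCounts (n : ℕ → S → A → ℕ) : ℕ → S → A → ℝ := fun h s a =>
  if 0 < ∑ a', n h s a' then (n h s a : ℝ) / (∑ a', (n h s a' : ℝ))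
  else 1 / (Fintype.card A : ℝ)

/-- The behavioral cloning policy of the sub-dataset of `D` selected by `keep`
(`keep = fun b => b` gives BC on the expert dataset `D^E`;
 `keep = fun _ => true` gives BC on the union dataset `D^U`, i.e., NBCU). -/
noncomputable def bcPolicy {H N : ℕ} (D : Dataset S A H N) (keep : Bool → Bool) :
    ℕ → S → A → ℝ :=
  bcFromCounts (fun h s a => countSA D keep h s a)

/-!
Every expert-labeled trajectory follows the deterministic expert, so `π^BC` coincides with `π^E`
at every `(h, s)` visited by `D^E`, and elsewhere its `L¹` error is at most `2`. By the
simulation lemma the value gap is at most `H Σ_h E_{s ∼ d^E_h} ‖π^E_h(·|s) - π^BC_h(·|s)‖₁`,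
hence at most `2H Σ_h Σ_s d^E_h(s) 1[s unseen at step h]`. The trajectories are i.i.d., so `s`
is unseen at step `h` with probability `(1 - η d^E_h(s))^N`, and `x (1 - η x)^N ≤ 1 / (η N)`.
-/

theorem nat_mul_mul_one_sub_pow_le_one {x : ℝ} (hx0 : 0 ≤ x) (hx1 : x ≤ 1) (N : ℕ) :
    N * x * (1 - x) ^ N ≤ 1 := calc
  _ ≤ (1 + N * x) * (1 - x) ^ N := by gcongr; linarith
  _ ≤ (1 + x) ^ N * (1 - x) ^ N :=
    mul_le_mul_of_nonneg_right (one_add_mul_le_pow (by linarith) N) (pow_nonneg (by linarith) N)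
  _ = (1 - x ^ 2) ^ N := by rw [← mul_pow]; ring
  _ ≤ 1 := pow_le_one₀ (by nlinarith) (by nlinarith)

section Occupancy

omit [DecidableEq S] [DecidableEq A]

theorem MDP.nonempty_state (M : MDP S A) : Nonempty S := by
  by_contra hS
  simpa [not_nonempty_iff.1 hS] using M.ρ_sum

variable (M : MDP S A) {π : ℕ → S → A → ℝ}

theorem dState_nonneg (hπ : ∀ h s a, 0 ≤ π h s a) (h : ℕ) (s : S) : 0 ≤ dState M π h s := by
  induction h generalizing s with
  | zero => exact M.ρ_nonneg s
  | succ h ih =>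
    exact sum_nonneg fun s _ => sum_nonneg fun a _ =>
      mul_nonneg (mul_nonneg (ih s) (hπ h s a)) (M.P_nonneg h s a _)

theorem dSA_nonneg (hπ : ∀ h s a, 0 ≤ π h s a) (h : ℕ) (s : S) (a : A) : 0 ≤ dSA M π h s a :=
  mul_nonneg (dState_nonneg M hπ h s) (hπ h s a)

theorem sum_dSA (hπ : ∀ h s, ∑ a, π h s a = 1) (h : ℕ) (s : S) :
    ∑ a, dSA M π h s a = dState M π h s := by
  simp only [dSA, ← mul_sum, hπ, mul_one]

theorem sum_dSA_mul_P (h : ℕ) (s : S) (a : A) :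
    ∑ s', dSA M π h s a * M.P h s a s' = dSA M π h s a := by
  rw [← mul_sum, M.P_sum, mul_one]

theorem dState_succ (h : ℕ) (s' : S) :
    dState M π (h + 1) s' = ∑ s, ∑ a, dSA M π h s a * M.P h s a s' := rfl

theorem sum_dState (hπ : ∀ h s, ∑ a, π h s a = 1) (h : ℕ) : ∑ s, dState M π h s = 1 := by
  induction h with
  | zero => exact M.ρ_sum
  | succ h ih =>
    rw [← ih]
    simp only [dState_succ]
    rw [sum_comm]
    refine sum_congr rfl fun s _ => ?_
    rw [sum_comm, ← sum_dSA M hπ]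
    exact sum_congr rfl fun a _ => sum_dSA_mul_P M h s a

theorem dState_le_one (hπ : IsPolicy π) (h : ℕ) (s : S) : dState M π h s ≤ 1 :=
  sum_dState M hπ.2 h ▸ single_le_sum (fun s _ => dState_nonneg M hπ.1 h s) (mem_univ s)

theorem value_nonneg (hπ : ∀ h s a, 0 ≤ π h s a) : 0 ≤ value M π :=
  sum_nonneg fun h _ => sum_nonneg fun s _ => sum_nonneg fun a _ =>
    mul_nonneg (dSA_nonneg M hπ h s a) (M.r_nonneg h s a)

theorem value_le_horizon (hπ : IsPolicy π) : value M π ≤ M.H := by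
  unfold value
  have step (h : ℕ) : ∑ s, ∑ a, dSA M π h s a * M.r h s a ≤ 1 := calc
    _ ≤ ∑ s, ∑ a, dSA M π h s a := by
      gcongr with s _ a _
      exact mul_le_of_le_one_right (dSA_nonneg M hπ.1 h s a) (M.r_le_one h s a)
    _ = 1 := by simp_rw [sum_dSA M hπ.2, sum_dState M hπ.2]
  simpa using sum_le_sum fun h (_ : h ∈ range M.H) => step h

theorem sum_dState_mul_one_sub_pow_le (hπ : IsPolicy π) {η : ℝ} (hη : η ∈ Set.Ioc (0 : ℝ) 1)
    {N : ℕ} (hN : 0 < N) (h : ℕ) :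
    ∑ s, dState M π h s * (1 - η * dState M π h s) ^ N ≤ Fintype.card S / (η * N) := by
  have hηN : 0 < η * N := mul_pos hη.1 (by exact_mod_cast hN)
  calc _ ≤ ∑ _s : S, 1 / (η * N) := sum_le_sum fun s _ => by
        rw [le_div_iff₀ hηN]
        have := nat_mul_mul_one_sub_pow_le_one (mul_nonneg hη.1.le (dState_nonneg M hπ.1 h s))
          (mul_le_one₀ hη.2 (dState_nonneg M hπ.1 h s) (dState_le_one M hπ h s)) N
        linarith
    _ = _ := by rw [sum_const, card_univ, nsmul_eq_mul, mul_one_div]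

end Occupancy

section Simulation

omit [DecidableEq S] [DecidableEq A]

variable (M : MDP S A) {π π' : ℕ → S → A → ℝ}

noncomputable def onPolicyL1Dist (M : MDP S A) (π' π : ℕ → S → A → ℝ) (t : ℕ) : ℝ :=
  ∑ s, dState M π' t s * ∑ a, |π' t s a - π t s a|

theorem onPolicyL1Dist_nonneg (hπ' : ∀ h s a, 0 ≤ π' h s a) (t : ℕ) :
    0 ≤ onPolicyL1Dist M π' π t :=
  sum_nonneg fun s _ => mul_nonneg (dState_nonneg M hπ' t s) (sum_nonneg fun _ _ => abs_nonneg _)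

theorem sum_abs_dSA_sub_le (hπ : IsPolicy π) (hπ' : ∀ h s a, 0 ≤ π' h s a) (h : ℕ) :
    ∑ s, ∑ a, |dSA M π h s a - dSA M π' h s a| ≤
      ∑ s, |dState M π h s - dState M π' h s| + onPolicyL1Dist M π' π h := by
  rw [onPolicyL1Dist, ← sum_add_distrib]
  gcongr with s _
  calc ∑ a, |dSA M π h s a - dSA M π' h s a|
      ≤ ∑ a, (|dState M π h s - dState M π' h s| * π h s a +
          dState M π' h s * |π' h s a - π h s a|) := by
        gcongr with a _
        have hsplit : dSA M π h s a - dSA M π' h s a =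
            (dState M π h s - dState M π' h s) * π h s a +
              dState M π' h s * (π h s a - π' h s a) := by
          simp only [dSA]; ring
        rw [hsplit, abs_sub_comm (π' h s a)]
        refine (abs_add_le _ _).trans_eq ?_
        rw [abs_mul, abs_mul, abs_of_nonneg (hπ.1 h s a), abs_of_nonneg (dState_nonneg M hπ' h s)]
    _ = _ := by rw [sum_add_distrib, ← mul_sum, ← mul_sum, hπ.2, mul_one]

theorem sum_abs_dState_succ_sub_le (h : ℕ) :
    ∑ s', |dState M π (h + 1) s' - dState M π' (h + 1) s'| ≤
      ∑ s, ∑ a, |dSA M π h s a - dSA M π' h s a| := calc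
  _ ≤ ∑ s', ∑ s, ∑ a, |dSA M π h s a - dSA M π' h s a| * M.P h s a s' := by
    gcongr with s' _
    simp only [dState_succ, ← sum_sub_distrib, ← sub_mul]
    refine (abs_sum_le_sum_abs _ _).trans (sum_le_sum fun s _ => ?_)
    refine (abs_sum_le_sum_abs _ _).trans_eq (sum_congr rfl fun a _ => ?_)
    rw [abs_mul, abs_of_nonneg (M.P_nonneg h s a s')]
  _ = _ := by
    rw [sum_comm]
    refine sum_congr rfl fun s _ => ?_
    rw [sum_comm]
    exact sum_congr rfl fun a _ => by rw [← mul_sum, M.P_sum, mul_one]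

theorem sum_abs_dState_sub_le (hπ : IsPolicy π) (hπ' : ∀ h s a, 0 ≤ π' h s a) (h : ℕ) :
    ∑ s, |dState M π h s - dState M π' h s| ≤ ∑ t ∈ range h, onPolicyL1Dist M π' π t := by
  induction h with
  | zero => simp [dState]
  | succ h ih =>
    rw [sum_range_succ]
    exact (sum_abs_dState_succ_sub_le M h).trans
      ((sum_abs_dSA_sub_le M hπ hπ' h).trans (by linarith))

theorem value_sub_le (hπ : IsPolicy π) (hπ' : ∀ h s a, 0 ≤ π' h s a) :
    value M π' - value M π ≤ M.H * ∑ t ∈ range M.H, onPolicyL1Dist M π' π t := by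
  have step (h : ℕ) (hh : h < M.H) :
      ∑ s, ∑ a, dSA M π' h s a * M.r h s a - ∑ s, ∑ a, dSA M π h s a * M.r h s a ≤
        ∑ t ∈ range M.H, onPolicyL1Dist M π' π t := calc
    _ ≤ ∑ s, ∑ a, |dSA M π h s a - dSA M π' h s a| := by
      simp only [← sum_sub_distrib, ← sub_mul]
      gcongr with s _ a _
      rw [abs_sub_comm]
      exact (mul_le_of_le_one_right (abs_nonneg _) (M.r_le_one h s a)).trans'
        (mul_le_mul_of_nonneg_right (le_abs_self _) (M.r_nonneg h s a))
    _ ≤ ∑ t ∈ range (h + 1), onPolicyL1Dist M π' π t := by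
      rw [sum_range_succ]
      linarith [sum_abs_dSA_sub_le M hπ hπ' h, sum_abs_dState_sub_le M hπ hπ' h]
    _ ≤ _ := sum_le_sum_of_subset_of_nonneg (range_subset_range.2 hh)
      fun t _ _ => onPolicyL1Dist_nonneg M hπ' t
  unfold value
  rw [← sum_sub_distrib]
  simpa using sum_le_sum fun h hh => step h (mem_range.1 hh)

end Simulation

section Trajectories

omit [DecidableEq S] [DecidableEq A]

variable (M : MDP S A) {π : ℕ → S → A → ℝ}

/-- `trajProb` with the horizon `M.H` replaced by an arbitrary length `n`, so that
`trajProb M π = prefixProb M π M.H` definitionally; for `n ≤ M.H` it is the probability that the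
first `n` state–action pairs of a rollout are `tr`. -/
noncomputable def prefixProb (M : MDP S A) (π : ℕ → S → A → ℝ) (n : ℕ) (tr : Fin n → S × A) : ℝ :=
  ∏ h : Fin n,
    ((if (h : ℕ) = 0 then M.ρ (tr h).1 else 1) * π h (tr h).1 (tr h).2 *
      (if hh : (h : ℕ) + 1 < n then M.P h (tr h).1 (tr h).2 (tr ⟨(h : ℕ) + 1, hh⟩).1 else 1))

theorem prefixProb_snoc (n : ℕ) (tr : Fin (n + 1) → S × A) (x : S × A) :
    prefixProb M π (n + 2) (Fin.snoc tr x) = prefixProb M π (n + 1) tr *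
      (M.P n (tr (Fin.last n)).1 (tr (Fin.last n)).2 x.1 * π (n + 1) x.1 x.2) := by
  rw [prefixProb, Fin.prod_univ_castSucc, Fin.prod_univ_castSucc, prefixProb,
    Fin.prod_univ_castSucc]
  have hnext (i : Fin n) (hi : (i : ℕ) + 1 < n + 2) :
      (Fin.snoc tr x : Fin (n + 2) → S × A) ⟨i + 1, hi⟩ = tr ⟨i + 1, by omega⟩ :=
    Fin.snoc_castSucc (α := fun _ => S × A) x tr ⟨i + 1, by omega⟩
  have hlast : (Fin.snoc tr x : Fin (n + 2) → S × A) ⟨n + 1, by omega⟩ = x :=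
    Fin.snoc_last (α := fun _ => S × A) x tr
  simp only [Fin.val_castSucc, Fin.val_last, Fin.snoc_castSucc, Fin.snoc_last, hnext, hlast,
    add_lt_add_iff_right, Order.lt_add_one_iff, Order.add_one_le_iff, Fin.is_lt, Fin.is_le',
    Std.le_refl, lt_self_iff_false, ↓reduceDIte, Nat.add_eq_zero_iff, one_ne_zero, and_false,
    ↓reduceIte, ite_mul, mul_ite, one_mul, mul_one]
  split_ifs <;> ring

theorem sum_fun_succ_eq_sum_snoc {X : Type} [Fintype X] {n : ℕ} (f : (Fin (n + 1) → X) → ℝ) :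
    ∑ u, f u = ∑ x, ∑ tr : Fin n → X, f (Fin.snoc tr x) := by
  rw [← (Fin.snocEquiv fun _ => X).sum_comp f, Fintype.sum_prod_type]
  rfl

theorem sum_prefixProb_snoc (hπ : ∀ h s, ∑ a, π h s a = 1) (n : ℕ) (tr : Fin n → S × A) :
    ∑ x, prefixProb M π (n + 1) (Fin.snoc tr x) = prefixProb M π n tr := by
  cases n with
  | zero =>
    simp [prefixProb, Fin.snoc_zero, Fintype.sum_prod_type, ← mul_sum, hπ, M.ρ_sum]
  | succ n =>
    simp only [prefixProb_snoc, ← mul_sum, Fintype.sum_prod_type, hπ, mul_one, M.P_sum]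

theorem sum_prefixProb_mul_last (n : ℕ) (g : S × A → ℝ) :
    ∑ tr, prefixProb M π (n + 1) tr * g (tr (Fin.last n)) =
      ∑ s, ∑ a, dSA M π n s a * g (s, a) := by
  induction n generalizing g with
  | zero =>
    rw [sum_fun_succ_eq_sum_snoc]
    simp [prefixProb, Fin.snoc_zero, Fintype.sum_prod_type, dSA, dState]
  | succ n ih =>
    rw [sum_fun_succ_eq_sum_snoc]
    simp only [Fin.snoc_last, prefixProb_snoc, Fintype.sum_prod_type]
    refine sum_congr rfl fun s _ => sum_congr rfl fun a _ => ?_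
    rw [dSA, dState_succ, ← ih fun y => M.P n y.1 y.2 s, sum_mul, sum_mul]
    exact sum_congr rfl fun tr _ => by ring

theorem sum_prefixProb_mul_apply (hπ : ∀ h s, ∑ a, π h s a = 1) {n h : ℕ} (hh : h < n)
    (g : S × A → ℝ) :
    ∑ tr, prefixProb M π n tr * g (tr ⟨h, hh⟩) = ∑ s, ∑ a, dSA M π h s a * g (s, a) := by
  induction n with
  | zero => omega
  | succ n ih =>
    rcases (Nat.lt_succ_iff_lt_or_eq.1 hh) with hlt | rfl
    · rw [sum_fun_succ_eq_sum_snoc, sum_comm, ← ih hlt]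
      refine sum_congr rfl fun tr _ => ?_
      rw [← sum_prefixProb_snoc M hπ n tr, sum_mul]
      refine sum_congr rfl fun x _ => ?_
      rw [show (⟨h, hh⟩ : Fin (n + 1)) = (⟨h, hlt⟩ : Fin n).castSucc from rfl, Fin.snoc_castSucc]
    · exact sum_prefixProb_mul_last M h g

theorem sum_prefixProb (hπ : ∀ h s, ∑ a, π h s a = 1) (n : ℕ) :
    ∑ tr, prefixProb M π n tr = 1 := by
  induction n with
  | zero => simp [prefixProb]
  | succ n ih =>
    rw [sum_fun_succ_eq_sum_snoc, sum_comm, ← ih]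
    exact sum_congr rfl fun tr _ => sum_prefixProb_snoc M hπ n tr

theorem sum_trajProb (hπ : ∀ h s, ∑ a, π h s a = 1) : ∑ tr, trajProb M π tr = 1 :=
  sum_prefixProb M hπ M.H

theorem sum_trajProb_mul_apply (hπ : ∀ h s, ∑ a, π h s a = 1) {h : ℕ} (hh : h < M.H)
    (g : S × A → ℝ) :
    ∑ tr, trajProb M π tr * g (tr ⟨h, hh⟩) = ∑ s, ∑ a, dSA M π h s a * g (s, a) :=
  sum_prefixProb_mul_apply M hπ hh g

theorem trajProb_nonneg (hπ : ∀ h s a, 0 ≤ π h s a) (tr : Fin M.H → S × A) :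
    0 ≤ trajProb M π tr :=
  prod_nonneg fun h _ => mul_nonneg
    (mul_nonneg (by split_ifs <;> simp [M.ρ_nonneg]) (hπ _ _ _))
    (by split_ifs <;> simp [M.P_nonneg])

end Trajectories

section DatasetLaw

omit [DecidableEq S] [DecidableEq A]

variable (M : MDP S A) (πE πβ : ℕ → S → A → ℝ) (η : ℝ) {N : ℕ}

noncomputable def labeledTrajProb (z : (Fin M.H → S × A) × Bool) : ℝ :=
  if z.2 then η * trajProb M πE z.1 else (1 - η) * trajProb M πβ z.1

theorem sum_labeledTrajProb_mul (g : (Fin M.H → S × A) × Bool → ℝ) :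
    ∑ z, labeledTrajProb M πE πβ η z * g z =
      η * ∑ tr, trajProb M πE tr * g (tr, true) +
        (1 - η) * ∑ tr, trajProb M πβ tr * g (tr, false) := by
  simp [labeledTrajProb, Fintype.sum_prod_type, sum_add_distrib, mul_sum, mul_assoc]

theorem expect_prod_eq_pow (g : (Fin M.H → S × A) × Bool → ℝ) :
    expect M πE πβ η N (fun D => ∏ i, g (D i)) =
      (∑ z, labeledTrajProb M πE πβ η z * g z) ^ N := by
  rw [Fintype.sum_pow]
  exact sum_congr rfl fun D _ => (prod_mul_distrib ..).symm

theorem sum_datasetProb (hπE : ∀ h s, ∑ a, πE h s a = 1) (hπβ : ∀ h s, ∑ a, πβ h s a = 1) :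
    ∑ D : Dataset S A M.H N, datasetProb M πE πβ η D = 1 := by
  have h := expect_prod_eq_pow M πE πβ η (N := N) fun _ => 1
  simp only [prod_const_one, _root_.expect, mul_one] at h
  have hsum := sum_labeledTrajProb_mul M πE πβ η fun _ => 1
  simp only [mul_one, sum_trajProb M hπE, sum_trajProb M hπβ] at hsum
  simp [h, hsum]

theorem datasetProb_nonneg (hπE : ∀ h s a, 0 ≤ πE h s a) (hπβ : ∀ h s a, 0 ≤ πβ h s a)
    (hη : η ∈ Set.Icc (0 : ℝ) 1) (D : Dataset S A M.H N) : 0 ≤ datasetProb M πE πβ η D :=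
  prod_nonneg fun i _ => by
    split_ifs
    · exact mul_nonneg hη.1 (trajProb_nonneg M hπE _)
    · exact mul_nonneg (sub_nonneg.2 hη.2) (trajProb_nonneg M hπβ _)

variable {M πE πβ η}

theorem expect_mono {f g : Dataset S A M.H N → ℝ}
    (hprob : ∀ D : Dataset S A M.H N, 0 ≤ datasetProb M πE πβ η D)
    (hfg : ∀ D : Dataset S A M.H N, datasetProb M πE πβ η D ≠ 0 → f D ≤ g D) :
    expect M πE πβ η N f ≤ expect M πE πβ η N g := by
  refine sum_le_sum fun D _ => ?_
  by_cases hD : datasetProb M πE πβ η D = 0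
  · simp [hD]
  · exact mul_le_mul_of_nonneg_left (hfg D hD) (hprob D)

theorem expect_sum {ι : Type} (s : Finset ι) (f : ι → Dataset S A M.H N → ℝ) :
    expect M πE πβ η N (fun D => ∑ i ∈ s, f i D) = ∑ i ∈ s, expect M πE πβ η N (f i) := by
  simp only [_root_.expect, mul_sum]
  exact sum_comm

theorem expect_const_mul (c : ℝ) (f : Dataset S A M.H N → ℝ) :
    expect M πE πβ η N (fun D => c * f D) = c * expect M πE πβ η N f := by
  simp only [_root_.expect, mul_sum, mul_left_comm]

theorem expect_fun_const (hπE : ∀ h s, ∑ a, πE h s a = 1) (hπβ : ∀ h s, ∑ a, πβ h s a = 1)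
    (c : ℝ) :
    expect M πE πβ η N (fun _ => c) = c := by
  rw [_root_.expect, ← sum_mul, sum_datasetProb M πE πβ η hπE hπβ, one_mul]

end DatasetLaw

section Policies

omit [Fintype S] [DecidableEq S] [DecidableEq A]

theorem IsPolicy.nonempty_action [Nonempty S] {π : ℕ → S → A → ℝ} (hπ : IsPolicy π) :
    Nonempty A := by
  by_contra hA
  simpa [not_nonempty_iff.1 hA] using hπ.2 0 (Classical.arbitrary S)

theorem IsPolicy.sum_abs_sub_le_two {π π' : ℕ → S → A → ℝ} (hπ : IsPolicy π) (hπ' : IsPolicy π')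
    (h : ℕ) (s : S) : ∑ a, |π h s a - π' h s a| ≤ 2 := calc
  _ ≤ ∑ a, (π h s a + π' h s a) := by
    gcongr with a _
    exact (abs_sub _ _).trans_eq (by rw [abs_of_nonneg (hπ.1 h s a), abs_of_nonneg (hπ'.1 h s a)])
  _ = 2 := by rw [sum_add_distrib, hπ.2, hπ'.2]; norm_num

theorem bcFromCounts_isPolicy [Nonempty A] (n : ℕ → S → A → ℕ) : IsPolicy (bcFromCounts n) := by
  refine ⟨fun h s a => by unfold bcFromCounts; split_ifs <;> positivity, fun h s => ?_⟩
  unfold bcFromCounts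
  split_ifs with hpos
  · rw [← sum_div, div_self]
    exact_mod_cast hpos.ne'
  · simp

end Policies

section BehavioralCloning

omit [Fintype S]

theorem bcPolicy_isPolicy [Nonempty A] {H N : ℕ} (D : Dataset S A H N) (keep : Bool → Bool) :
    IsPolicy (bcPolicy D keep) :=
  bcFromCounts_isPolicy _

theorem sum_countSA_eq_zero_iff {H N : ℕ} (D : Dataset S A H N) (keep : Bool → Bool) {h : ℕ}
    (hh : h < H) (s : S) :
    ∑ a, countSA D keep h s a = 0 ↔ ∀ i, keep (D i).2 = true → ((D i).1 ⟨h, hh⟩).1 ≠ s := by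
  simp only [countSA, hit, hh, ↓reduceDIte, Prod.ext_iff, Bool.decide_and, Bool.and_eq_true,
    decide_eq_true_eq, sum_eq_zero_iff, mem_univ, card_eq_zero, filter_eq_empty_iff, not_and,
    forall_const, ne_eq]
  exact ⟨fun H i hk hs => H _ hk hs rfl, fun H _ i hk hs => absurd hs (H i hk)⟩

def FollowsOnExpert {H N : ℕ} (f : ℕ → S → A) (D : Dataset S A H N) : Prop :=
  ∀ i, (D i).2 = true → ∀ h : Fin H, ((D i).1 h).2 = f h ((D i).1 h).1

omit [Fintype A] in
theorem countSA_eq_zero_of_ne {H N : ℕ} {f : ℕ → S → A} {D : Dataset S A H N}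
    (hD : FollowsOnExpert f D) {h : ℕ} {s : S} {a : A} (ha : a ≠ f h s) :
    countSA D (fun b => b) h s a = 0 := by
  simp only [countSA, card_eq_zero, filter_eq_empty_iff, mem_univ, true_implies, Bool.and_eq_true,
    hit, not_and]
  intro i hi
  split_ifs with hh
  · simp only [decide_eq_true_eq]
    intro heq
    exact ha (by simpa [heq] using hD i hi ⟨h, hh⟩)
  · simp

theorem bcPolicy_eq_of_sum_countSA_ne_zero {H N : ℕ} {f : ℕ → S → A} {D : Dataset S A H N}
    (hD : FollowsOnExpert f D) {h : ℕ} {s : S} (hs : ∑ a, countSA D (fun b => b) h s a ≠ 0)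
    (a : A) : bcPolicy D (fun b => b) h s a = if a = f h s then 1 else 0 := by
  have hsum : ∑ a', countSA D (fun b => b) h s a' = countSA D (fun b => b) h s (f h s) :=
    sum_eq_single _ (fun b _ hb => countSA_eq_zero_of_ne hD hb) (by simp)
  have hpos : countSA D (fun b => b) h s (f h s) ≠ 0 := hsum ▸ hs
  simp only [bcPolicy, bcFromCounts, ← Nat.cast_sum, hsum, if_pos (Nat.pos_of_ne_zero hpos)]
  split_ifs with ha
  · rw [ha, div_self (by exact_mod_cast hpos)]
  · rw [countSA_eq_zero_of_ne hD ha, Nat.cast_zero, zero_div]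

noncomputable def unseenInd {H N : ℕ} (D : Dataset S A H N) (h : ℕ) (s : S) : ℝ :=
  if ∑ a, countSA D (fun b => b) h s a = 0 then 1 else 0

theorem unseenInd_eq_prod {H N : ℕ} (D : Dataset S A H N) {h : ℕ} (hh : h < H) (s : S) :
    unseenInd D h s = ∏ i, (1 - if (D i).2 = true ∧ ((D i).1 ⟨h, hh⟩).1 = s then 1 else 0) := by
  by_cases hunseen : ∀ i, (D i).2 = true → ((D i).1 ⟨h, hh⟩).1 ≠ s
  · rw [unseenInd, if_pos ((sum_countSA_eq_zero_iff D _ hh s).2 hunseen)]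
    exact (prod_eq_one fun i _ => by rw [if_neg fun hi => hunseen i hi.1 hi.2, sub_zero]).symm
  · rw [unseenInd, if_neg (mt (sum_countSA_eq_zero_iff D _ hh s).1 hunseen)]
    push Not at hunseen
    obtain ⟨i, hi⟩ := hunseen
    exact (prod_eq_zero (mem_univ i) (by rw [if_pos hi, sub_self])).symm

theorem sum_abs_sub_bcPolicy_le [Nonempty A] {πE : ℕ → S → A → ℝ} (hπE : IsPolicy πE)
    {f : ℕ → S → A} (hf : ∀ h s a, πE h s a = if a = f h s then 1 else 0) {H N : ℕ}
    {D : Dataset S A H N} (hD : FollowsOnExpert f D) (h : ℕ) (s : S) :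
    ∑ a, |πE h s a - bcPolicy D (fun b => b) h s a| ≤ 2 * unseenInd D h s := by
  unfold unseenInd
  split_ifs with hs
  · simpa using hπE.sum_abs_sub_le_two (bcPolicy_isPolicy D _) h s
  · simp [hf, bcPolicy_eq_of_sum_countSA_ne_zero hD hs]

end BehavioralCloning

section ExpertData

omit [DecidableEq S] in
theorem followsOnExpert_of_datasetProb_ne_zero (M : MDP S A) {πE : ℕ → S → A → ℝ}
    (πβ : ℕ → S → A → ℝ) (η : ℝ) {N : ℕ} {f : ℕ → S → A}
    (hf : ∀ h s a, πE h s a = if a = f h s then 1 else 0) {D : Dataset S A M.H N}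
    (hD : datasetProb M πE πβ η D ≠ 0) : FollowsOnExpert f D := by
  intro i hi h
  by_contra hoff
  refine hD (prod_eq_zero (mem_univ i) ?_)
  rw [if_pos hi, trajProb, prod_eq_zero (mem_univ h) (by rw [hf, if_neg hoff]; ring), mul_zero]

theorem expect_unseenInd (M : MDP S A) {πE πβ : ℕ → S → A → ℝ} (hπE : ∀ h s, ∑ a, πE h s a = 1)
    (hπβ : ∀ h s, ∑ a, πβ h s a = 1) (η : ℝ) (N : ℕ) {h : ℕ} (hh : h < M.H) (s : S) :
    expect M πE πβ η N (fun D => unseenInd D h s) = (1 - η * dState M πE h s) ^ N := by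
  have hE : ∑ tr, trajProb M πE tr * (1 - if true = true ∧ (tr ⟨h, hh⟩).1 = s then 1 else 0) =
      1 - dState M πE h s := by
    simp only [true_and, mul_sub, mul_one, sum_sub_distrib, sum_trajProb M hπE]
    rw [sum_trajProb_mul_apply M hπE hh fun x => if x.1 = s then 1 else 0]
    simp [sum_dSA M hπE]
  have hβ :
      ∑ tr, trajProb M πβ tr * (1 - if false = true ∧ (tr ⟨h, hh⟩).1 = s then 1 else 0) = 1 := by
    simp [sum_trajProb M hπβ]
  simp only [unseenInd_eq_prod _ hh]
  rw [expect_prod_eq_pow M πE πβ η fun z => 1 - if z.2 = true ∧ (z.1 ⟨h, hh⟩).1 = s then 1 else 0,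
    sum_labeledTrajProb_mul, hE, hβ]
  ring

theorem value_sub_bcPolicy_le [Nonempty A] (M : MDP S A) {πE : ℕ → S → A → ℝ}
    (hπE : IsPolicy πE) {f : ℕ → S → A} (hf : ∀ h s a, πE h s a = if a = f h s then 1 else 0)
    {N : ℕ} {D : Dataset S A M.H N} (hD : FollowsOnExpert f D) :
    value M πE - value M (bcPolicy D (fun b => b)) ≤
      2 * M.H * ∑ t ∈ range M.H, ∑ s, dState M πE t s * unseenInd D t s := by
  refine (value_sub_le M (bcPolicy_isPolicy D _) hπE.1).trans ?_
  calc _ ≤ M.H * ∑ t ∈ range M.H, ∑ s, dState M πE t s * (2 * unseenInd D t s) := by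
        unfold onPolicyL1Dist
        gcongr with t _ s _
        · exact dState_nonneg M hπE.1 t s
        · exact sum_abs_sub_bcPolicy_le hπE hf hD t s
    _ = _ := by
        simp only [mul_sum]
        exact sum_congr rfl fun t _ => sum_congr rfl fun s _ => by ring

end ExpertData

/-- **Theorem 1 (BC on the expert dataset).**
Under Assumption 1 with `η ∈ (0,1]`, the behavioral cloning policy `π^BC` trained on the
expert dataset `D^E` satisfies
`E[V(π^E) − V(π^BC)] ≤ min{H, 2|S|H²/(η N_tot)}`,
where the expectation is over the randomness of the dataset collection. -/
theorem bc_expert_imitation_gap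
    (M : MDP S A) (πE πβ : ℕ → S → A → ℝ)
    (hπE : IsPolicy πE) (hdet : IsDetPolicy πE) (hπβ : IsPolicy πβ)
    (η : ℝ) (hη : η ∈ Set.Ioc (0 : ℝ) 1) (Ntot : ℕ) (hN : 0 < Ntot) :
    expect M πE πβ η Ntot
        (fun D => value M πE - value M (bcPolicy D (fun b => b)))
      ≤ min (M.H : ℝ) (2 * (Fintype.card S : ℝ) * (M.H : ℝ) ^ 2 / (η * Ntot)) := by
  obtain ⟨f, hf⟩ := hdet
  have := M.nonempty_state
  have := hπE.nonempty_action
  have hprob := datasetProb_nonneg M πE πβ η (N := Ntot) hπE.1 hπβ.1 (Set.Ioc_subset_Icc_self hη)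
  refine le_min ?_ ?_
  · calc _ ≤ expect M πE πβ η Ntot (fun _ => (M.H : ℝ)) := expect_mono hprob fun D _ => by
          linarith [value_le_horizon M hπE, value_nonneg M (bcPolicy_isPolicy D fun b => b).1]
      _ = M.H := expect_fun_const hπE.2 hπβ.2 _
  · calc _ ≤ expect M πE πβ η Ntot
          (fun D => 2 * M.H * ∑ t ∈ range M.H, ∑ s, dState M πE t s * unseenInd D t s) :=
          expect_mono hprob fun D hD => value_sub_bcPolicy_le M hπE hf
            (followsOnExpert_of_datasetProb_ne_zero M πβ η hf hD)
      _ = 2 * M.H * ∑ t ∈ range M.H, ∑ s, dState M πE t s * (1 - η * dState M πE t s) ^ Ntot := by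
          simp only [expect_const_mul, expect_sum]
          congr 1
          refine sum_congr rfl fun t ht => sum_congr rfl fun s _ => ?_
          rw [expect_unseenInd M hπE.2 hπβ.2 η Ntot (mem_range.1 ht)]
      _ ≤ 2 * M.H * ∑ _t ∈ range M.H, Fintype.card S / (η * Ntot) := by
          gcongr with t _
          exact sum_dState_mul_one_sub_pow_le M hπE hη hN t
      _ = _ := by rw [sum_const, card_range, nsmul_eq_mul]; ring
end

section
/- Let G and B be nonempty finite sets of points, each point x carrying a feature vector φ(x) ∈ ℝ^d, with margin function Δ(θ) = min_{x ∈ G} ⟨θ, φ(x)⟩ − max_{y ∈ B} ⟨θ, φ(y)⟩. Let L : ℝ^d → ℝ be the logistic loss L(θ) = (1/m) Σ_{i=1}^m log(1 + exp(−⟨x_i, θ⟩)) + (1/n) Σ_{j=1}^n log(1 + exp(⟨y_j, θ⟩)) built from feature vectors x_1,…,x_m, y_1,…,y_n ∈ ℝ^d, let θ* be a global minimizer of L, and let θ̄ ∈ ℝ^d satisfy Δ(θ̄) > 0 (linear separability). Suppose τ > 0 satisfies the quadratic growth inequality L(θ̄) ≥ L(θ*) + (τ/2)‖θ̄ − θ*‖²,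 and let L_lip = ‖φ(x₁) − φ(x₂)‖ where x₁ ∈ argmin_{x ∈ G} ⟨θ*, φ(x)⟩ and x₂ ∈ argmax_{y ∈ B} ⟨θ*, φ(y)⟩. If L_lip · sqrt(2(L(θ̄) − L(θ*))/τ) < Δ(θ̄), then Δ(θ*) > 0. -/
/-!
Since `x₁` and `x₂` realise the minimum and the maximum at `θ*`, the margin there is the
linear functional `Δ(θ*) = ⟪θ*, φ x₁ - φ x₂⟫`, while at any other `θ̄` this functional only
bounds the margin from above. By Cauchy–Schwarz the functional moves by at most
`‖θ̄ - θ*‖ · L_lip` between `θ̄` and `θ*`, and quadratic growth bounds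
`‖θ̄ - θ*‖ ≤ sqrt(2(L(θ̄) - L(θ*))/τ)`; so `Δ(θ*) ≥ Δ(θ̄) - L_lip · sqrt(…) > 0`.
-/

open Finset RealInnerProductSpace

lemma Finset.inf'_eq_of_forall_le {α β : Type*} [SemilatticeInf α] {s : Finset β}
    (H : s.Nonempty) {f : β → α} {b : β} (hb : b ∈ s) (hmin : ∀ c ∈ s, f b ≤ f c) :
    s.inf' H f = f b :=
  le_antisymm (inf'_le f hb) (le_inf' H f hmin)

lemma Finset.sup'_eq_of_forall_le {α β : Type*} [SemilatticeSup α] {s : Finset β}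
    (H : s.Nonempty) {f : β → α} {b : β} (hb : b ∈ s) (hmax : ∀ c ∈ s, f c ≤ f b) :
    s.sup' H f = f b :=
  le_antisymm (sup'_le H f hmax) (le_sup' f hb)

lemma real_inner_le_inner_add_norm_sub_mul_norm {E : Type*} [NormedAddCommGroup E]
    [InnerProductSpace ℝ E] (a b v : E) : ⟪a, v⟫ ≤ ⟪b, v⟫ + ‖a - b‖ * ‖v‖ := by
  have := real_inner_le_norm (a - b) v
  rw [inner_sub_left] at this
  linarith

lemma le_sqrt_of_quadratic_growth {a b r τ : ℝ} (hτ : 0 < τ) (h : a + τ / 2 * r ^ 2 ≤ b) :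
    r ≤ √(2 * (b - a) / τ) := by
  refine Real.le_sqrt_of_sq_le ?_
  rw [le_div_iff₀ hτ]
  linarith

theorem wbcu_margin_positive_general {X : Type} {d m n : ℕ}
    (G B : Finset X) (hG : G.Nonempty) (hB : B.Nonempty)
    (φ : X → EuclideanSpace ℝ (Fin d))
    (Δ : EuclideanSpace ℝ (Fin d) → ℝ)
    (hΔ : ∀ θ, Δ θ = G.inf' hG (fun x => ⟪θ, φ x⟫) - B.sup' hB (fun y => ⟪θ, φ y⟫))
    (x : Fin m → EuclideanSpace ℝ (Fin d)) (y : Fin n → EuclideanSpace ℝ (Fin d))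
    (L : EuclideanSpace ℝ (Fin d) → ℝ)
    (θs : EuclideanSpace ℝ (Fin d))
    (θb : EuclideanSpace ℝ (Fin d))
    (τ : ℝ) (hτ : 0 < τ) (hqg : L θs + τ / 2 * ‖θb - θs‖ ^ 2 ≤ L θb)
    (x1 x2 : X)
    (hx1 : x1 ∈ G) (hx1min : ∀ x' ∈ G, ⟪θs, φ x1⟫ ≤ ⟪θs, φ x'⟫)
    (hx2 : x2 ∈ B) (hx2max : ∀ y' ∈ B, ⟪θs, φ y'⟫ ≤ ⟪θs, φ x2⟫)
    (hcond : ‖φ x1 - φ x2‖ * Real.sqrt (2 * (L θb - L θs) / τ) < Δ θb) :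
    0 < Δ θs := by
  have hΔs : Δ θs = ⟪θs, φ x1 - φ x2⟫ := by
    rw [hΔ, inf'_eq_of_forall_le hG hx1 hx1min, sup'_eq_of_forall_le hB hx2 hx2max,
      inner_sub_right]
  have hΔb : Δ θb ≤ ⟪θb, φ x1 - φ x2⟫ := by
    rw [hΔ, inner_sub_right]
    exact sub_le_sub (inf'_le _ hx1) (le_sup' (fun y => ⟪θb, φ y⟫) hx2)
  have hdist : ‖θb - θs‖ ≤ √(2 * (L θb - L θs) / τ) := le_sqrt_of_quadratic_growth hτ hqg
  calc 0 < Δ θb - ‖φ x1 - φ x2‖ * √(2 * (L θb - L θs) / τ) := sub_pos.2 hcond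
    _ ≤ ⟪θb, φ x1 - φ x2⟫ - ‖θb - θs‖ * ‖φ x1 - φ x2‖ := by
      rw [mul_comm]; gcongr
    _ ≤ ⟪θs, φ x1 - φ x2⟫ :=
      sub_le_iff_le_add.2 (real_inner_le_inner_add_norm_sub_mul_norm θb θs _)
    _ = Δ θs := hΔs.symm

/-- **Theorem 5 (WBCU discriminator keeps a positive margin).**
Let `Δ(θ) = min_{x ∈ G} ⟪θ, φ x⟫ − max_{y ∈ B} ⟪θ, φ y⟫` be the margin function of the
nonempty finite sets `G` (good samples) and `B` (bad samples), let `L` be the logistic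
loss built from features `x_1,…,x_m, y_1,…,y_n`, let `θ*` be a global minimizer of `L`,
and let `θ̄` satisfy `Δ(θ̄) > 0` (linear separability).  If `τ > 0` satisfies the
quadratic growth inequality `L(θ̄) ≥ L(θ*) + (τ/2)‖θ̄ − θ*‖²` and
`L_lip · sqrt(2(L(θ̄) − L(θ*))/τ) < Δ(θ̄)` where `L_lip = ‖φ x₁ − φ x₂‖` with `x₁` a
minimizer of `⟪θ*, φ x⟫` over `G` and `x₂` a maximizer of `⟪θ*, φ y⟫` over `B`, then
`Δ(θ*) > 0`. -/
theorem wbcu_margin_positive {X : Type} {d m n : ℕ}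
    (G B : Finset X) (hG : G.Nonempty) (hB : B.Nonempty)
    (φ : X → EuclideanSpace ℝ (Fin d))
    (Δ : EuclideanSpace ℝ (Fin d) → ℝ)
    (hΔ : ∀ θ, Δ θ = G.inf' hG (fun x => ⟪θ, φ x⟫) - B.sup' hB (fun y => ⟪θ, φ y⟫))
    (x : Fin m → EuclideanSpace ℝ (Fin d)) (y : Fin n → EuclideanSpace ℝ (Fin d))
    (L : EuclideanSpace ℝ (Fin d) → ℝ)
    (hL : ∀ θ, L θ =
      (1 / (m : ℝ)) * ∑ i, Real.log (1 + Real.exp (-⟪x i, θ⟫)) +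
      (1 / (n : ℝ)) * ∑ j, Real.log (1 + Real.exp (⟪y j, θ⟫)))
    (θs : EuclideanSpace ℝ (Fin d)) (hmin : ∀ θ, L θs ≤ L θ)
    (θb : EuclideanSpace ℝ (Fin d)) (hsep : 0 < Δ θb)
    (τ : ℝ) (hτ : 0 < τ) (hqg : L θs + τ / 2 * ‖θb - θs‖ ^ 2 ≤ L θb)
    (x1 x2 : X)
    (hx1 : x1 ∈ G) (hx1min : ∀ x' ∈ G, ⟪θs, φ x1⟫ ≤ ⟪θs, φ x'⟫)
    (hx2 : x2 ∈ B) (hx2max : ∀ y' ∈ B, ⟪θs, φ y'⟫ ≤ ⟪θs, φ x2⟫)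
    (hcond : ‖φ x1 - φ x2‖ * Real.sqrt (2 * (L θb - L θs) / τ) < Δ θb) :
    0 < Δ θs :=
  wbcu_margin_positive_general G B hG hB φ Δ hΔ x y L θs θb τ hτ hqg x1 x2 hx1 hx1min hx2 hx2max
    hcond
end

section
/- Consider dimension d = 1. Let D^E (expert samples) and D^S = D^{S,1} ∪ D^{S,2} (supplementary samples) be nonempty finite multisets of points, each point carrying a feature φ ∈ ℝ, with union D^U = D^E ∪ D^S, and define the logistic loss L(θ) = (1/|D^E|) Σ_{x ∈ D^E} log(1 + exp(−φ(x)·θ)) + (1/|D^U|) Σ_{x ∈ D^U} log(1 + exp(φ(x)·θ)) for θ ∈ ℝ. Let θ̄ ∈ ℝ, θ̄ ≠ 0, satisfy the linear separability condition Δ(θ̄) > 0, where Δ(θ) = min_{x ∈ D^E ∪ D^{S,1}} θ·φ(x) − max_{y ∈ D^{S,2}} θ·φ(y), and suppose θ* ∈ ℝ is a global minimizer of L. Then Δ(θ*) > 0 if and only if (1/|D^S|) Σ_{x ∈ D^S} φ(x)·θ̄ < (1/|D^E|) Σ_{x ∈ D^E} φ(x)·θ̄. -/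
/-!
Positivity of the margin at `θ` only depends on the sign of `θ`: by separability at `θ̄`,
`Δ(θ) > 0` exactly when `θ θ̄ > 0`. The loss is a positive combination of softplus terms
`log (1 + exp (a θ))`, whose derivatives `a · sigmoid (a θ)` are monotone, strictly so when
`a ≠ 0`; separability forces some feature to be nonzero, so `L'` is strictly increasing and
the minimizer `θ*` lies on the side of `0` opposite to the sign of `L'(0)`. Finally
`θ̄ L'(0) < 0` compares the mean of `φ · θ̄` over `D^U` with its mean over `D^E`, which is the
same as comparing its means over `D^S` and `D^E`.
-/

open Finset Real

theorem sub_pos_inf'_sup'_iff {α ι κ : Type*} [AddCommGroup α] [LinearOrder α]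
    [IsOrderedAddMonoid α] {s : Finset ι} {t : Finset κ} (hs : s.Nonempty) (ht : t.Nonempty)
    (f : ι → α) (g : κ → α) :
    0 < s.inf' hs f - t.sup' ht g ↔ ∀ i ∈ s, ∀ k ∈ t, g k < f i := by
  simp only [sub_pos, sup'_lt_iff, lt_inf'_iff]

theorem pos_mul_iff_pos_mul_of_pos_mul {R : Type*} [CommRing R] [LinearOrder R]
    [IsStrictOrderedRing R] {a b x : R} (h : 0 < b * x) : 0 < a * x ↔ 0 < a * b := by
  constructor <;> intro h' <;> nlinarith [mul_pos h h', sq_nonneg x, sq_nonneg b]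

theorem forall_mul_lt_mul_iff_pos_mul {R ι κ : Type*} [CommRing R] [LinearOrder R]
    [IsStrictOrderedRing R] [Nonempty ι] [Nonempty κ] {u : ι → R} {v : κ → R} {θ₀ : R}
    (h : ∀ i k, θ₀ * v k < θ₀ * u i) (θ : R) :
    (∀ i k, θ * v k < θ * u i) ↔ 0 < θ * θ₀ := by
  have key (i : ι) (k : κ) : θ * v k < θ * u i ↔ 0 < θ * θ₀ := by
    rw [← sub_pos, ← mul_sub]
    exact pos_mul_iff_pos_mul_of_pos_mul (by rw [mul_sub, sub_pos]; exact h i k)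
  simp only [key, forall_const]

theorem add_div_add_lt_div_iff {K : Type*} [Field K] [LinearOrder K] [IsStrictOrderedRing K]
    {a b c d : K} (hb : 0 < b) (hd : 0 < d) : (a + c) / (b + d) < a / b ↔ c / d < a / b := by
  rw [div_lt_div_iff₀ (add_pos hb hd) hb, div_lt_div_iff₀ hd hb]
  constructor <;> intro h <;> linarith [add_mul a c b, mul_add a b d]

theorem pos_mul_iff_mul_deriv_neg_of_isMin {f f' : ℝ → ℝ} (hf : ∀ x, HasDerivAt f (f' x) x)
    (hf' : StrictMono f') {x₀ : ℝ} (hmin : ∀ x, f x₀ ≤ f x) (t : ℝ) :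
    0 < x₀ * t ↔ t * f' 0 < 0 := by
  have hcrit : f' x₀ = 0 :=
    IsLocalMin.hasDerivAt_eq_zero (Filter.Eventually.of_forall hmin) (hf x₀)
  have hpos : 0 < x₀ ↔ f' 0 < 0 := by rw [← hcrit]; exact hf'.lt_iff_lt.symm
  have hneg : x₀ < 0 ↔ 0 < f' 0 := by rw [← hcrit]; exact hf'.lt_iff_lt.symm
  rw [mul_pos_iff, mul_neg_iff, hpos, hneg]
  tauto

theorem hasDerivAt_log_one_add_exp (x : ℝ) :
    HasDerivAt (fun y => log (1 + exp y)) (sigmoid x) x := by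
  convert ((hasDerivAt_exp x).const_add 1).log (by positivity) using 1
  rw [sigmoid_def, exp_neg]
  field_simp
  ring

section SoftplusSum

variable {ι : Type*} [Fintype ι]

noncomputable def softplusSum (a : ι → ℝ) (θ : ℝ) : ℝ := ∑ i, log (1 + exp (a i * θ))

noncomputable def softplusSumDeriv (a : ι → ℝ) (θ : ℝ) : ℝ := ∑ i, a i * sigmoid (a i * θ)

theorem hasDerivAt_softplusSum (a : ι → ℝ) (θ : ℝ) :
    HasDerivAt (softplusSum a) (softplusSumDeriv a θ) θ := by
  refine HasDerivAt.fun_sum fun i _ => ?_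
  have := (hasDerivAt_log_one_add_exp (a i * θ)).comp θ ((hasDerivAt_id θ).const_mul (a i))
  simpa [Function.comp_def, mul_comm] using this

theorem mul_sigmoid_mul_strictMono {a : ℝ} (ha : a ≠ 0) :
    StrictMono fun θ => a * sigmoid (a * θ) := by
  rcases ha.lt_or_gt with ha | ha
  · exact fun x y hxy => mul_lt_mul_of_neg_left
      (sigmoid_strictMono (mul_lt_mul_of_neg_left hxy ha)) ha
  · exact (sigmoid_strictMono.comp (strictMono_mul_left_of_pos ha)).const_mul ha

theorem mul_sigmoid_mul_monotone (a : ℝ) : Monotone fun θ => a * sigmoid (a * θ) := by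
  rcases eq_or_ne a 0 with rfl | ha
  · simp [monotone_const]
  · exact (mul_sigmoid_mul_strictMono ha).monotone

theorem softplusSumDeriv_monotone (a : ι → ℝ) : Monotone (softplusSumDeriv a) :=
  fun _ _ h => sum_le_sum fun i _ => mul_sigmoid_mul_monotone (a i) h

theorem softplusSumDeriv_strictMono {a : ι → ℝ} (ha : a ≠ 0) :
    StrictMono (softplusSumDeriv a) := by
  obtain ⟨j, hj⟩ := Function.ne_iff.mp ha
  exact fun _ _ h => sum_lt_sum (fun i _ => mul_sigmoid_mul_monotone (a i) h.le)
    ⟨j, mem_univ j, mul_sigmoid_mul_strictMono hj h⟩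

theorem softplusSumDeriv_zero (a : ι → ℝ) : softplusSumDeriv a 0 = (∑ i, a i) / 2 := by
  simp [softplusSumDeriv, sum_mul, div_eq_mul_inv]

end SoftplusSum

/-- `c * ∑ a i + d * ∑ b k` is twice the derivative of the loss at `0`. -/
theorem pos_mul_iff_of_isMin_softplusSum {ι κ : Type*} [Fintype ι] [Fintype κ]
    {a : ι → ℝ} {b : κ → ℝ} (hb : b ≠ 0) {c d : ℝ} (hc : 0 ≤ c) (hd : 0 < d) {θs : ℝ}
    (hmin : ∀ θ, c * softplusSum a θs + d * softplusSum b θs ≤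
      c * softplusSum a θ + d * softplusSum b θ) (t : ℝ) :
    0 < θs * t ↔ t * (c * (∑ i, a i) + d * ∑ k, b k) < 0 := by
  have hderiv (θ : ℝ) : HasDerivAt (fun θ => c * softplusSum a θ + d * softplusSum b θ)
      (c * softplusSumDeriv a θ + d * softplusSumDeriv b θ) θ :=
    ((hasDerivAt_softplusSum a θ).const_mul c).add ((hasDerivAt_softplusSum b θ).const_mul d)
  have hmono : StrictMono fun θ => c * softplusSumDeriv a θ + d * softplusSumDeriv b θ :=
    ((softplusSumDeriv_monotone a).const_mul hc).add_strictMono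
      ((softplusSumDeriv_strictMono hb).const_mul hd)
  rw [pos_mul_iff_mul_deriv_neg_of_isMin hderiv hmono hmin, softplusSumDeriv_zero,
    softplusSumDeriv_zero]
  constructor <;> intro h <;> linarith

/-- `φE` lists the features of `D^E`, `φS` those of `D^S`, and `Sum.elim φE φS` those of `D^U`. -/
noncomputable def logisticLoss {ι κ : Type*} [Fintype ι] [Fintype κ] (φE : ι → ℝ) (φS : κ → ℝ)
    (θ : ℝ) : ℝ :=
  (Fintype.card ι : ℝ)⁻¹ * softplusSum (-φE) θ +
    ((Fintype.card ι : ℝ) + Fintype.card κ)⁻¹ * softplusSum (Sum.elim φE φS) θ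

theorem pos_mul_iff_mean_lt_of_isMin_logisticLoss {ι κ : Type*} [Fintype ι] [Fintype κ]
    [Nonempty ι] [Nonempty κ] {φE : ι → ℝ} {φS : κ → ℝ} (hφ : Sum.elim φE φS ≠ 0) {θs : ℝ}
    (hmin : ∀ θ, logisticLoss φE φS θs ≤ logisticLoss φE φS θ) (t : ℝ) :
    0 < θs * t ↔
      (∑ k, φS k * t) / Fintype.card κ < (∑ i, φE i * t) / Fintype.card ι := by
  have hE : (0 : ℝ) < Fintype.card ι := by exact_mod_cast Fintype.card_pos
  have hS : (0 : ℝ) < Fintype.card κ := by exact_mod_cast Fintype.card_pos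
  rw [pos_mul_iff_of_isMin_softplusSum hφ (by positivity) (by positivity) hmin, ← sum_mul,
    ← sum_mul, ← add_div_add_lt_div_iff hE hS, ← sub_neg (b := _ / _)]
  simp only [Pi.neg_apply, sum_neg_distrib, Fintype.sum_sum_type, Sum.elim_inl, Sum.elim_inr]
  ring_nf

theorem wbcu_one_dimensional_sharp_condition_general
    (mE m1 m2 : ℕ) (hmE : 0 < mE) (hm2 : 0 < m2)
    (φE : Fin mE → ℝ) (φ1 : Fin m1 → ℝ) (φ2 : Fin m2 → ℝ)
    (L : ℝ → ℝ)
    (hL : ∀ θ, L θ =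
      (1 / (mE : ℝ)) * ∑ i, Real.log (1 + Real.exp (-(φE i * θ))) +
      (1 / ((mE : ℝ) + m1 + m2)) *
        ((∑ i, Real.log (1 + Real.exp (φE i * θ))) +
         (∑ j, Real.log (1 + Real.exp (φ1 j * θ))) +
         (∑ k, Real.log (1 + Real.exp (φ2 k * θ)))))
    (Δ : ℝ → ℝ)
    (hΔ : ∀ θ, Δ θ =
      Finset.univ.inf' ⟨Sum.inl ⟨0, hmE⟩, Finset.mem_univ _⟩
          (fun i : Fin mE ⊕ Fin m1 => θ * Sum.elim φE φ1 i) -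
        Finset.univ.sup' ⟨⟨0, hm2⟩, Finset.mem_univ _⟩ (fun k : Fin m2 => θ * φ2 k))
    (θb : ℝ) (hsep : 0 < Δ θb)
    (θs : ℝ) (hmin : ∀ θ, L θs ≤ L θ) :
    0 < Δ θs ↔
      (1 / ((m1 : ℝ) + m2)) * ((∑ j, φ1 j * θb) + ∑ k, φ2 k * θb)
        < (1 / (mE : ℝ)) * ∑ i, φE i * θb := by
  have := Fin.pos_iff_nonempty.mp hmE
  have := Fin.pos_iff_nonempty.mp hm2
  have hmargin (θ : ℝ) : 0 < Δ θ ↔ ∀ i k, θ * φ2 k < θ * Sum.elim φE φ1 i := by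
    rw [hΔ]
    exact (sub_pos_inf'_sup'_iff _ _ _ _).trans (by simp only [mem_univ, forall_const])
  have hsep' := (hmargin θb).mp hsep
  have hφ : Sum.elim φE (Sum.elim φ1 φ2) ≠ 0 := fun h => by
    have hE := congrFun h (Sum.inl ⟨0, hmE⟩)
    have h2 := congrFun h (Sum.inr (Sum.inr ⟨0, hm2⟩))
    simp only [Sum.elim_inl, Sum.elim_inr, Pi.zero_apply] at hE h2
    simpa [hE, h2] using hsep' (Sum.inl ⟨0, hmE⟩) ⟨0, hm2⟩
  have hL' : L = logisticLoss φE (Sum.elim φ1 φ2) := funext fun θ => by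
    simp [hL, logisticLoss, softplusSum, Fintype.sum_sum_type, add_assoc]
  rw [hmargin, forall_mul_lt_mul_iff_pos_mul hsep',
    pos_mul_iff_mean_lt_of_isMin_logisticLoss hφ (hL' ▸ hmin)]
  simp [Fintype.sum_sum_type, div_eq_inv_mul]

/-- **Theorem 6 (sharp condition for WBCU in dimension `d = 1`).**
Let `D^E` (expert samples, features `φE`), `D^{S,1}` (expert-generated supplementary
samples, features `φ1`) and `D^{S,2}` (sub-optimal supplementary samples, features `φ2`)
be finite multisets of real features, `D^S = D^{S,1} ∪ D^{S,2}`, with logistic loss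
`L(θ) = (1/|D^E|) Σ_{x ∈ D^E} log(1 + exp(−φ(x)θ)) + (1/|D^U|) Σ_{x ∈ D^U} log(1 + exp(φ(x)θ))`
where `D^U = D^E ∪ D^S`, and margin
`Δ(θ) = min_{x ∈ D^E ∪ D^{S,1}} θ·φ(x) − max_{y ∈ D^{S,2}} θ·φ(y)`.
If `θ̄ ≠ 0` satisfies the linear separability condition `Δ(θ̄) > 0` and `θ*` is a global
minimizer of `L`, then `Δ(θ*) > 0` if and only if
`(1/|D^S|) Σ_{x ∈ D^S} φ(x)·θ̄ < (1/|D^E|) Σ_{x ∈ D^E} φ(x)·θ̄`. -/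
theorem wbcu_one_dimensional_sharp_condition
    (mE m1 m2 : ℕ) (hmE : 0 < mE) (hm2 : 0 < m2)
    (φE : Fin mE → ℝ) (φ1 : Fin m1 → ℝ) (φ2 : Fin m2 → ℝ)
    (L : ℝ → ℝ)
    (hL : ∀ θ, L θ =
      (1 / (mE : ℝ)) * ∑ i, Real.log (1 + Real.exp (-(φE i * θ))) +
      (1 / ((mE : ℝ) + m1 + m2)) *
        ((∑ i, Real.log (1 + Real.exp (φE i * θ))) +
         (∑ j, Real.log (1 + Real.exp (φ1 j * θ))) +
         (∑ k, Real.log (1 + Real.exp (φ2 k * θ)))))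
    (Δ : ℝ → ℝ)
    (hΔ : ∀ θ, Δ θ =
      Finset.univ.inf' ⟨Sum.inl ⟨0, hmE⟩, Finset.mem_univ _⟩
          (fun i : Fin mE ⊕ Fin m1 => θ * Sum.elim φE φ1 i) -
        Finset.univ.sup' ⟨⟨0, hm2⟩, Finset.mem_univ _⟩ (fun k : Fin m2 => θ * φ2 k))
    (θb : ℝ) (hθb : θb ≠ 0) (hsep : 0 < Δ θb)
    (θs : ℝ) (hmin : ∀ θ, L θs ≤ L θ) :
    0 < Δ θs ↔
      (1 / ((m1 : ℝ) + m2)) * ((∑ j, φ1 j * θb) + ∑ k, φ2 k * θb)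
        < (1 / (mE : ℝ)) * ∑ i, φE i * θb :=
  wbcu_one_dimensional_sharp_condition_general mE m1 m2 hmE hm2 φE φ1 φ2 L hL Δ hΔ θb hsep θs hmin
end
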